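/- arXiv:1609.09037 — 7 statements merged into one kernel-verified Lean document; each statement's English description precedes it below -/
import Mathlib

section
/- For every utility vector u : ι → ℝ and every marginal-cost vector c : ι → ℝ, the value max(max_{i ∈ ι}(u i − c i), 0) is the greatest element of the set of social-welfare values w for which there exist prices p : ι → ℝ and a user-optimal decision d for (p, u) whose social welfare equals w. (Paper's Theorem 1: the maximum value of social welfare over all pricing strategies is max{max_{l,t}(u_{l,t} − v_{l,t} + v_{−k}), 0}.) -/
open Finset

/-- A decision `d` is user-optimal for prices `p` and utilities `u`:
if the user accepts option `i`, it has nonnegative payoff and maximal payoff among all options;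
if the user rejects all options, every option has negative payoff. -/
def userOptimal {ι : Type*} [Fintype ι] (p u : ι → ℝ) : Option ι → Prop
  | some i => 0 ≤ u i - p i ∧ ∀ j, u j - p j ≤ u i - p i
  | none => ∀ j, u j - p j < 0

/-- Social welfare of a decision: `u i - c i` if option `i` is accepted, `0` otherwise. -/
def welfare {ι : Type*} (c u : ι → ℝ) : Option ι → ℝ
  | some i => u i - c i
  | none => 0

/-
Welfare never exceeds `max (max_i (u i - c i)) 0`, whatever the decision. Conversely, marginal-cost
pricing `p = c` makes the user's payoff coincide with the social welfare, so a user-optimal decision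
(which always exists) maximises the welfare.
-/

theorem welfare_le_max_sup' {ι : Type*} [Fintype ι] [Nonempty ι] (c u : ι → ℝ) (d : Option ι) :
    welfare c u d ≤ max (univ.sup' univ_nonempty (fun i => u i - c i)) 0 := by
  cases d with
  | none => exact le_max_right _ _
  | some i => exact (le_sup' (fun i => u i - c i) (mem_univ i)).trans (le_max_left _ _)

theorem exists_userOptimal {ι : Type*} [Fintype ι] [Nonempty ι] (p u : ι → ℝ) :
    ∃ d, userOptimal p u d := by
  obtain ⟨i, hi⟩ := Finite.exists_max (fun j => u j - p j)
  rcases le_or_gt 0 (u i - p i) with hnonneg | hneg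
  · exact ⟨some i, hnonneg, hi⟩
  · exact ⟨none, fun j => (hi j).trans_lt hneg⟩

theorem userOptimal.welfare_eq {ι : Type*} [Fintype ι] [Nonempty ι] {p u : ι → ℝ}
    {d : Option ι} (hd : userOptimal p u d) :
    welfare p u d = max (univ.sup' univ_nonempty (fun i => u i - p i)) 0 := by
  cases d with
  | none =>
    have hsup : univ.sup' univ_nonempty (fun i => u i - p i) < 0 :=
      (sup'_lt_iff _).2 fun j _ => hd j
    exact (max_eq_right hsup.le).symm
  | some i =>
    obtain ⟨hnonneg, hmax⟩ := hd
    have hsup : univ.sup' univ_nonempty (fun i => u i - p i) = u i - p i :=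
      le_antisymm (sup'_le _ _ fun j _ => hmax j) (le_sup' (fun i => u i - p i) (mem_univ i))
    rw [hsup, max_eq_left hnonneg]
    rfl

/-- The maximum value of social welfare over all pricing strategies is
`max (max_i (u i - c i)) 0`. -/
theorem max_social_welfare {ι : Type*} [Fintype ι] [Nonempty ι] (u c : ι → ℝ) :
    IsGreatest
      {w : ℝ | ∃ (p : ι → ℝ) (d : Option ι), userOptimal p u d ∧ welfare c u d = w}
      (max (univ.sup' univ_nonempty (fun i => u i - c i)) 0) := by
  refine ⟨?_, ?_⟩
  · obtain ⟨d, hd⟩ := exists_userOptimal c u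
    exact ⟨c, d, hd, hd.welfare_eq⟩
  · rintro w ⟨p, d, -, rfl⟩
    exact welfare_le_max_sup' c u d
end

section
/- If the prices are set equal to marginal cost, p i = c i for every i ∈ ι, then every user-optimal decision d for (p, u) has social welfare exactly max(max_{i ∈ ι}(u i − c i), 0); i.e., this pricing strategy maximizes the social welfare. (Paper's Theorem 2.) -/
open Finset

/-- Marginal-cost pricing `p = c` maximizes the social welfare: every user-optimal
decision under prices `c` has social welfare `max (max_i (u i - c i)) 0`. -/
theorem marginal_cost_pricing_max_welfare {ι : Type*} [Fintype ι] [Nonempty ι]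
    (u c : ι → ℝ) (d : Option ι) (hd : userOptimal c u d) :
    welfare c u d = max (univ.sup' univ_nonempty (fun i => u i - c i)) 0 := by
  match d, hd with
  | some i, ⟨h0, hmax⟩ =>
    simp only [welfare]
    rw [max_eq_left]
    · exact le_antisymm (le_sup' (fun j => u j - c j) (mem_univ i)) (sup'_le _ _ fun j _ => hmax j)
    · exact le_trans h0 (le_sup' (fun j => u j - c j) (mem_univ i))
  | none, h =>
    simp only [welfare]
    rw [max_eq_right]
    exact le_of_lt ((sup'_lt_iff _).mpr fun j _ => h j)
end

section
/- Let M = max_{j ∈ ι}(u j − c j) and set the prices p i = c i + M⁺ for every i, where x⁺ = max(x, 0). Then every user-optimal decision d for (p, u) has profit exactly M⁺ and social welfare exactly max(M, 0); in particular this pricing simultaneously maximizes the charging station's profit and the social welfare. (Paper's Theorem 3, for a clairvoyant charging station.) -/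
open Finset

/-- Profit of a decision: `p i - c i` if option `i` is accepted, `0` otherwise. -/
def profit {ι : Type*} (p c : ι → ℝ) : Option ι → ℝ
  | some i => p i - c i
  | none => 0

/-- Clairvoyant pricing (Theorem 3): with `M = max_j (u j - c j)` and prices
`p i = c i + M⁺`, every user-optimal decision has profit exactly `M⁺` and
social welfare exactly `max M 0`; hence this pricing simultaneously maximizes
the charging station's profit and the social welfare. -/
theorem clairvoyant_pricing {ι : Type*} [Fintype ι] [Nonempty ι]
    (u c : ι → ℝ) (M : ℝ) (hM : M = univ.sup' univ_nonempty (fun j => u j - c j))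
    (p : ι → ℝ) (hp : ∀ i, p i = c i + max M 0)
    (d : Option ι) (hd : userOptimal p u d) :
    profit p c d = max M 0 ∧ welfare c u d = max M 0 := by
  cases d with
  | some i =>
    obtain ⟨h1, h2⟩ := hd
    have hle : u i - c i ≤ M := by
      rw [hM]; exact le_sup' (fun j => u j - c j) (mem_univ i)
    have hge : max M 0 ≤ u i - c i := by
      have := h1; rw [hp i] at this; linarith
    have heq : u i - c i = max M 0 :=
      le_antisymm (hle.trans (le_max_left M 0)) hge
    constructor
    · simp [profit, hp i]
    · simpa [welfare] using heq
  | none =>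
    obtain ⟨j, _, hj⟩ := exists_mem_eq_sup' (univ_nonempty (α := ι)) (fun j => u j - c j)
    have hjlt : u j - p j < 0 := hd j
    rw [hp j] at hjlt
    have hMj : M = u j - c j := by rw [hM, hj]
    have : max M 0 = 0 := by
      rcases max_cases M 0 with ⟨h, _⟩ | ⟨h, _⟩ <;> [linarith; exact h]
    simp [profit, welfare, this]
end

section
/- Fix δ > 0 and set the prices p i = c i + δ for all i ∈ ι. If the utility vector u : ι → ℝ satisfies either max_{i}(u i − c i) < 0 or max_{i}(u i − c i) ≥ δ, then every user-optimal decision d for (p, u) has social welfare exactly max(max_{i}(u i − c i), 0). (Deterministic core of the paper's Theorem 5: the shifted-cost pricing fails to maximize welfare only when 0 ≤ max_{i}(u i − c i) < δ.) -/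
open Finset

/-- Deterministic core of the paper's Theorem 5: with prices `p i = c i + δ` (δ > 0),
whenever `max_i (u i - c i) < 0` or `max_i (u i - c i) ≥ δ`, every user-optimal decision
attains the maximal social welfare `max (max_i (u i - c i)) 0`. -/
theorem shifted_cost_pricing_welfare {ι : Type*} [Fintype ι] [Nonempty ι]
    (u c : ι → ℝ) (δ : ℝ) (hδ : 0 < δ) (p : ι → ℝ) (hp : ∀ i, p i = c i + δ)
    (hu : univ.sup' univ_nonempty (fun i => u i - c i) < 0 ∨
          δ ≤ univ.sup' univ_nonempty (fun i => u i - c i))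
    (d : Option ι) (hd : userOptimal p u d) :
    welfare c u d = max (univ.sup' univ_nonempty (fun i => u i - c i)) 0 := by
  cases d with
  | none =>
    have hM : univ.sup' univ_nonempty (fun i => u i - c i) < δ := by
      apply (sup'_lt_iff _).2
      intro j _
      have := hd j
      rw [hp j] at this
      linarith
    have hM0 : univ.sup' univ_nonempty (fun i => u i - c i) < 0 := by
      rcases hu with h | h
      · exact h
      · linarith
    simp [welfare, max_eq_right hM0.le]
  | some i =>
    obtain ⟨h0, hmax⟩ := hd
    rw [hp i] at h0
    have hi : δ ≤ u i - c i := by linarith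
    have hle : univ.sup' univ_nonempty (fun j => u j - c j) ≤ u i - c i := by
      apply (sup'_le_iff _ _).2
      intro j _
      have := hmax j
      rw [hp i, hp j] at this
      linarith
    have hge : u i - c i ≤ univ.sup' univ_nonempty (fun j => u j - c j) :=
      le_sup' (fun j => u j - c j) (mem_univ i)
    have heq := le_antisymm hle hge
    simp [welfare, ← heq, max_eq_left (by linarith : (0:ℝ) ≤ _)]
end

section
/- Let U : Ω → (ι → ℝ) be measurable random utilities, let ε > 0, and let δ > 0 satisfy ℙ(max_{i}(U i − c i) ≥ 0) ≤ ε + ℙ(max_{i}(U i − c i) ≥ δ). Set prices p i = c i + δ. Then there exists a measurable event E ⊆ Ω with ℙ(E) ≥ 1 − ε such that for every ω ∈ E, every user-optimal decision d for (p, U ω) has social welfare exactly max(max_{i}(U ω i − c i), 0). (Paper's Theorem 5: the pricing p = v − v_{−k} + δ(ε) maximizes the ex-post social welfare with probability at least 1 − ε.) -/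
open Finset MeasureTheory

/-- Theorem 5 of the paper: if `δ > 0` satisfies
`ℙ(max_i (U i - c i) ≥ 0) ≤ ε + ℙ(max_i (U i - c i) ≥ δ)`, then the pricing
`p i = c i + δ` maximizes the ex-post social welfare with probability at least `1 - ε`. -/
theorem shifted_cost_pricing_prob {ι : Type*} [Fintype ι] [Nonempty ι]
    {Ω : Type*} [MeasurableSpace Ω] (ℙ : Measure Ω) [IsProbabilityMeasure ℙ]
    (c : ι → ℝ) (U : Ω → ι → ℝ) (hU : Measurable U)
    (ε : ℝ) (hε : 0 < ε) (δ : ℝ) (hδ : 0 < δ)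
    (hprob : ℙ {ω | 0 ≤ univ.sup' univ_nonempty (fun i => U ω i - c i)} ≤
      ENNReal.ofReal ε + ℙ {ω | δ ≤ univ.sup' univ_nonempty (fun i => U ω i - c i)})
    (p : ι → ℝ) (hp : ∀ i, p i = c i + δ) :
    ∃ E : Set Ω, MeasurableSet E ∧ 1 - ENNReal.ofReal ε ≤ ℙ E ∧
      ∀ ω ∈ E, ∀ d : Option ι, userOptimal p (U ω) d →
        welfare c (U ω) d = max (univ.sup' univ_nonempty (fun i => U ω i - c i)) 0 := by

  classical
  set M : Ω → ℝ := fun ω => univ.sup' univ_nonempty (fun i => U ω i - c i) with hM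
  have hMmeas : Measurable M := by
    have : M = univ.sup' univ_nonempty (fun i ω => U ω i - c i) :=
      funext fun ω => (Finset.sup'_apply univ_nonempty (fun i ω => U ω i - c i) ω).symm
    rw [this]
    exact Finset.measurable_sup' univ_nonempty
      (fun i _ => ((measurable_pi_apply i).comp hU).sub measurable_const)
  refine ⟨{ω | M ω ≤ 0} ∪ {ω | δ ≤ M ω}, ?_, ?_, ?_⟩
  · exact (measurableSet_le hMmeas measurable_const).union
      (measurableSet_le measurable_const hMmeas)
  · -- probability bound
    have hsub : ({ω | M ω ≤ 0} ∪ {ω | δ ≤ M ω})ᶜ ⊆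
        {ω | 0 ≤ M ω} \ {ω | δ ≤ M ω} := by
      intro ω hω
      simp only [Set.mem_compl_iff, Set.mem_union, Set.mem_setOf_eq, not_or, not_le] at hω
      exact ⟨le_of_lt hω.1, by simpa using not_le.mpr hω.2⟩
    have hBA : {ω | δ ≤ M ω} ⊆ {ω | 0 ≤ M ω} := fun ω h => le_trans hδ.le h
    have hdiff : ℙ ({ω | 0 ≤ M ω} \ {ω | δ ≤ M ω}) ≤ ENNReal.ofReal ε := by
      have := measure_diff hBA (measurableSet_le measurable_const hMmeas).nullMeasurableSet
        (measure_ne_top ℙ _)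
      rw [this]
      exact tsub_le_iff_right.mpr hprob
    have hcompl : ℙ (({ω | M ω ≤ 0} ∪ {ω | δ ≤ M ω})ᶜ) ≤ ENNReal.ofReal ε :=
      le_trans (measure_mono hsub) hdiff
    have hcc := prob_compl_eq_one_sub (μ := ℙ)
      (s := {ω | M ω ≤ 0} ∪ {ω | δ ≤ M ω})
      ((measurableSet_le hMmeas measurable_const).union
        (measurableSet_le measurable_const hMmeas))
    calc 1 - ENNReal.ofReal ε ≤ 1 - ℙ (({ω | M ω ≤ 0} ∪ {ω | δ ≤ M ω})ᶜ) :=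
          tsub_le_tsub_left hcompl 1
      _ = ℙ ({ω | M ω ≤ 0} ∪ {ω | δ ≤ M ω}) := by
          rw [hcc]
          rw [ENNReal.sub_sub_cancel ENNReal.one_ne_top prob_le_one]
  · intro ω hω d hd
    match d with
    | some i =>
        obtain ⟨h1, h2⟩ := hd
        have hi : δ ≤ U ω i - c i := by
          have := h1
          rw [hp i] at this
          linarith
        have hmax : ∀ j, U ω j - c j ≤ U ω i - c i := by
          intro j
          have := h2 j
          rw [hp i, hp j] at this
          linarith
        have hMi : M ω = U ω i - c i :=
          le_antisymm (Finset.sup'_le _ _ fun j _ => hmax j)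
            (Finset.le_sup' (fun j => U ω j - c j) (mem_univ i))
        have : max (M ω) 0 = M ω := max_eq_left (by linarith [hi, hMi.ge])
        simp only [welfare, hM] at *
        rw [this, hMi]
    | none =>
        have hlt : M ω < δ := by
          refine (Finset.sup'_lt_iff univ_nonempty).mpr fun j _ => ?_
          have := hd j
          rw [hp j] at this
          linarith
        rcases hω with h | h
        · simp only [welfare]
          rw [max_eq_right h]
        · exact absurd h (not_le.mpr hlt)
end

section
/- Fix β ≥ 0 and set the prices p i = c i + β. Let U : Ω → (ι → ℝ) be measurable random utilities and let d : Ω → Option ι be measurable such that for every ω, d ω is user-optimal for (p, U ω). Then the expected profit equals β · ℙ(max_{i}(U i − c i) ≥ β), i.e., β times the probability that the user accepts at least one contract. (Probabilistic form of the paper's Theorem 6.) -/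
open Finset MeasureTheory

theorem userOptimal.ne_none_iff {ι : Type*} [Fintype ι] {p u : ι → ℝ} {d : Option ι}
    (h : userOptimal p u d) : d ≠ none ↔ ∃ i, 0 ≤ u i - p i := by
  cases d with
  | none => simpa [userOptimal] using h
  | some i => exact iff_of_true (Option.some_ne_none i) ⟨i, h.1⟩

theorem profit_of_fixed_margin {ι α : Type*} {p c : ι → ℝ} {β : ℝ} (hp : ∀ i, p i = c i + β)
    (d : α → Option ι) (x : α) :
    profit p c (d x) = {x | d x ≠ none}.indicator (fun _ => β) x := by
  cases h : d x <;> simp [h, hp, profit]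

theorem fixed_profit_expected_general {ι : Type*} [Fintype ι] [Nonempty ι]
    {Ω : Type*} [MeasurableSpace Ω] (ℙ : Measure Ω)
    (c : ι → ℝ) (β : ℝ) (p : ι → ℝ) (hp : ∀ i, p i = c i + β)
    (U : Ω → ι → ℝ)
    (d : Ω → Option ι) (hd : ∀ o : Option ι, MeasurableSet {ω | d ω = o})
    (hopt : ∀ ω, userOptimal p (U ω) (d ω)) :
    (∫ ω, profit p c (d ω) ∂ℙ) =
      β * (ℙ {ω | β ≤ univ.sup' univ_nonempty (fun i => U ω i - c i)}).toReal := by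
  have accepted_eq :
      {ω | d ω ≠ none} = {ω | β ≤ univ.sup' univ_nonempty (fun i => U ω i - c i)} := by
    ext ω
    simp only [Set.mem_ofPred_eq, (hopt ω).ne_none_iff, le_sup'_iff, mem_univ, true_and, hp]
    exact exists_congr fun i => by constructor <;> intro <;> linarith
  have accepted_meas : MeasurableSet {ω | d ω ≠ none} := (hd none).compl
  simp only [profit_of_fixed_margin hp]
  rw [integral_indicator_const _ accepted_meas, accepted_eq, smul_eq_mul, mul_comm, Measure.real]

/-- Probabilistic form of the paper's Theorem 6: under the fixed-profit pricing
`p i = c i + β`, the expected profit equals `β` times the probability that the user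
accepts at least one contract, i.e. `β · ℙ(max_i (U i - c i) ≥ β)`. -/
theorem fixed_profit_expected {ι : Type*} [Fintype ι] [Nonempty ι]
    {Ω : Type*} [MeasurableSpace Ω] (ℙ : Measure Ω) [IsProbabilityMeasure ℙ]
    (c : ι → ℝ) (β : ℝ) (hβ : 0 ≤ β) (p : ι → ℝ) (hp : ∀ i, p i = c i + β)
    (U : Ω → ι → ℝ) (hU : Measurable U)
    (d : Ω → Option ι) (hd : ∀ o : Option ι, MeasurableSet {ω | d ω = o})
    (hopt : ∀ ω, userOptimal p (U ω) (d ω)) :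
    (∫ ω, profit p c (d ω) ∂ℙ) =
      β * (ℙ {ω | β ≤ univ.sup' univ_nonempty (fun i => U ω i - c i)}).toReal :=
  fixed_profit_expected_general ℙ c β p hp U d hd hopt
end

section
/- Assume the additive-noise utilities of Assumption 1: U i (ω) = (Y i + X ω)⁺ with Y : ι → ℝ deterministic, X : Ω → ℝ a real random variable, and ℙ(∀ i, Y i + X ≥ 0) = 1. Fix β ≥ 0, set the prices p i = c i + β, and let d : Ω → Option ι be measurable such that for every ω, d ω is user-optimal for (p, U ω). Then the expected profit equals β · max_{i ∈ ι} ℙ(U i ≥ c i + β). (Paper's Theorem 6: under the pricing p_{k,l,t} = v_{l,t} − v_{−k} + β, the expected profit is β max_{l,t} Pr(U_{k,l,t} ≥ v_{l,t} − v_{−k} + β).) -/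
open Finset MeasureTheory

/-!
With prices `c i + β` every accepted option earns exactly `β`, and a user-optimal user accepts
some option iff some event `Eᵢ = {c i + β ≤ U i}` occurs, so the expected profit is
`β · ℙ(⋃ᵢ Eᵢ)`. Under additive noise, `Eᵢ = {c i - Y i + β ≤ X}` almost surely, so the events
are nested and their union is the event of the option maximising `Y i - c i`, which has the
largest probability.
-/

theorem measureReal_iUnion_eq_sup'_of_ae_le {ι Ω : Type*} [Fintype ι] [Nonempty ι]
    [MeasurableSpace Ω] {μ : Measure Ω} [IsFiniteMeasure μ] {s : ι → Set Ω} {i₀ : ι}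
    (h : ∀ i, s i ≤ᵐ[μ] s i₀) :
    μ.real (⋃ i, s i) = univ.sup' univ_nonempty fun i => μ.real (s i) := by
  have hunion : (⋃ i, s i) =ᵐ[μ] s i₀ := by
    refine Filter.EventuallyLE.antisymm ?_ (Filter.Eventually.of_forall (Set.subset_iUnion s i₀))
    filter_upwards [ae_all_iff.2 h] with ω hω
    rintro ⟨_, ⟨i, rfl⟩, hωi⟩
    exact hω i hωi
  rw [measureReal_congr hunion]
  exact le_antisymm (le_sup' (fun i => μ.real (s i)) (mem_univ i₀))
    (sup'_le _ _ fun i _ => ENNReal.toReal_mono (measure_ne_top μ _) (measure_mono_ae (h i)))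

theorem userOptimal.profit_eq {ι : Type*} [Fintype ι] {c u : ι → ℝ} {β : ℝ} {o : Option ι}
    (h : userOptimal (fun i => c i + β) u o) :
    profit (fun i => c i + β) c o = if ∃ i, c i + β ≤ u i then β else 0 := by
  cases o with
  | none =>
    have : ¬∃ i, c i + β ≤ u i := fun ⟨i, hi⟩ => by linarith [h i]
    simp [profit, this]
  | some i =>
    have : ∃ i, c i + β ≤ u i := ⟨i, by linarith [h.1]⟩
    simp [profit, this]

theorem fixed_profit_expected_additive_general {ι : Type*} [Fintype ι] [Nonempty ι]
    {Ω : Type*} [MeasurableSpace Ω] (ℙ : Measure Ω) [IsProbabilityMeasure ℙ]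
    (c Y : ι → ℝ) (X : Ω → ℝ) (hX : Measurable X)
    (U : Ω → ι → ℝ) (hUdef : ∀ ω i, U ω i = max (Y i + X ω) 0)
    (hpos : ℙ {ω | ∀ i, 0 ≤ Y i + X ω} = 1)
    (β : ℝ) (p : ι → ℝ) (hp : ∀ i, p i = c i + β)
    (d : Ω → Option ι)
    (hopt : ∀ ω, userOptimal p (U ω) (d ω)) :
    (∫ ω, profit p c (d ω) ∂ℙ) =
      β * univ.sup' univ_nonempty (fun i => (ℙ {ω | c i + β ≤ U ω i}).toReal) := by
  obtain rfl : p = fun i => c i + β := funext hp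
  set E : ι → Set Ω := fun i => {ω | c i + β ≤ U ω i}
  have hE : ∀ i, MeasurableSet (E i) := fun i =>
    measurableSet_le measurable_const (by simp only [hUdef]; fun_prop)
  have hadditive : ∀ᵐ ω ∂ℙ, ∀ i, 0 ≤ Y i + X ω := by
    refine (ae_iff_measure_eq ?_).2 (by rw [hpos, measure_univ])
    simp only [Set.ofPred_forall]
    exact (MeasurableSet.iInter fun i =>
      measurableSet_le (by fun_prop) (by fun_prop)).nullMeasurableSet
  obtain ⟨i₀, -, hi₀⟩ := exists_max_image univ (fun i => Y i - c i) univ_nonempty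
  have hnested : ∀ i, E i ≤ᵐ[ℙ] E i₀ := fun i => by
    filter_upwards [hadditive] with ω hω (hωi : c i + β ≤ U ω i)
    show c i₀ + β ≤ U ω i₀
    rw [hUdef, max_eq_left (hω i₀)]
    rw [hUdef, max_eq_left (hω i)] at hωi
    linarith [hi₀ i (mem_univ i)]
  calc ∫ ω, profit _ c (d ω) ∂ℙ = ∫ ω, (⋃ i, E i).indicator (fun _ => β) ω ∂ℙ := by
        congr 1 with ω
        simp only [(hopt ω).profit_eq, Set.indicator, Set.mem_iUnion]
        rfl
    _ = β * ℙ.real (⋃ i, E i) := by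
        rw [integral_indicator_const _ (MeasurableSet.iUnion hE), smul_eq_mul, mul_comm]
    _ = _ := by rw [measureReal_iUnion_eq_sup'_of_ae_le hnested]; rfl

/-- Theorem 6 of the paper: under additive-noise utilities `U i = (Y i + X)⁺` with
`ℙ(∀ i, Y i + X ≥ 0) = 1` and the fixed-profit pricing `p i = c i + β`, the expected
profit equals `β · max_i ℙ(U i ≥ c i + β)`. -/
theorem fixed_profit_expected_additive {ι : Type*} [Fintype ι] [Nonempty ι]
    {Ω : Type*} [MeasurableSpace Ω] (ℙ : Measure Ω) [IsProbabilityMeasure ℙ]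
    (c Y : ι → ℝ) (X : Ω → ℝ) (hX : Measurable X)
    (U : Ω → ι → ℝ) (hUdef : ∀ ω i, U ω i = max (Y i + X ω) 0)
    (hpos : ℙ {ω | ∀ i, 0 ≤ Y i + X ω} = 1)
    (β : ℝ) (hβ : 0 ≤ β) (p : ι → ℝ) (hp : ∀ i, p i = c i + β)
    (d : Ω → Option ι) (hd : ∀ o : Option ι, MeasurableSet {ω | d ω = o})
    (hopt : ∀ ω, userOptimal p (U ω) (d ω)) :
    (∫ ω, profit p c (d ω) ∂ℙ) =
      β * univ.sup' univ_nonempty (fun i => (ℙ {ω | c i + β ≤ U ω i}).toReal) :=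
  fixed_profit_expected_additive_general ℙ c Y X hX U hUdef hpos β p hp d hopt
end
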